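/- Let α, β, γ, α', β', γ' > 0 with αβγ = α'β'γ', and for positive parameters define Q_{α,β,γ}(ξ) = ξ₁₁² + ξ₂₂² + ξ₃₃² − 2ξ₁₁ξ₂₂ − 2ξ₂₂ξ₃₃ − 2ξ₃₃ξ₁₁ + α ξ₁₂² + β ξ₂₃² + γ ξ₃₁². Then Q_{α,β,γ} and Q_{α',β',γ'} are rank-one equivalent: there exist invertible linear maps A, B : ℝ³ → ℝ³ (which may be taken diagonal, A = diag(λ₁, λ₂, λ₃) and B = diag(1/λ₁, 1/λ₂, 1/λ₃) for suitable nonzero λ₁, λ₂, λ₃) such that Q_{α,β,γ}(x ⊗ y) = Q_{α',β',γ'}((Ax) ⊗ (By)) for all x, y ∈ ℝ³. -/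
import Mathlib


/-- The tensor (outer) product of two vectors in ℝ³, as a 3×3 matrix. -/
def outer (x y : Fin 3 → ℝ) : Matrix (Fin 3) (Fin 3) ℝ :=
  fun i j => x i * y j

/-- The quadratic form `Q_{α,β,γ}(ξ) = ξ₁₁² + ξ₂₂² + ξ₃₃² − 2ξ₁₁ξ₂₂ − 2ξ₂₂ξ₃₃ − 2ξ₃₃ξ₁₁
+ α ξ₁₂² + β ξ₂₃² + γ ξ₃₁²`. -/
def Qgen (α β γ : ℝ) (ξ : Matrix (Fin 3) (Fin 3) ℝ) : ℝ :=
  ξ 0 0 ^ 2 + ξ 1 1 ^ 2 + ξ 2 2 ^ 2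
    - 2 * ξ 0 0 * ξ 1 1 - 2 * ξ 1 1 * ξ 2 2 - 2 * ξ 2 2 * ξ 0 0
    + α * ξ 0 1 ^ 2 + β * ξ 1 2 ^ 2 + γ * ξ 2 0 ^ 2

/-- for positive parameters with `αβγ = α'β'γ'`, the quadratic forms
`Q_{α,β,γ}` and `Q_{α',β',γ'}` are rank-one equivalent, with the equivalence realized by
diagonal maps `A = diag(λ₁,λ₂,λ₃)` and `B = diag(1/λ₁,1/λ₂,1/λ₃)` for suitable nonzero
`λ₁, λ₂, λ₃`. -/
theorem Qgen_rankOneEquiv (α β γ α' β' γ' : ℝ)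
    (hα : 0 < α) (hβ : 0 < β) (hγ : 0 < γ)
    (hα' : 0 < α') (hβ' : 0 < β') (hγ' : 0 < γ')
    (hprod : α * β * γ = α' * β' * γ') :
    ∃ l : Fin 3 → ℝ, (∀ i, l i ≠ 0) ∧
      ∀ x y : Fin 3 → ℝ,
        Qgen α β γ (outer x y)
          = Qgen α' β' γ' (outer (fun i => l i * x i) (fun i => y i / l i)) := by
  set a : ℝ := Real.sqrt (α / α') with ha_def
  set b : ℝ := Real.sqrt (β / β') with hb_def
  have ha2 : a ^ 2 = α / α' := Real.sq_sqrt (le_of_lt (div_pos hα hα'))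
  have hb2 : b ^ 2 = β / β' := Real.sq_sqrt (le_of_lt (div_pos hβ hβ'))
  have hα'0 : α' ≠ 0 := ne_of_gt hα'
  have hβ'0 : β' ≠ 0 := ne_of_gt hβ'
  have ha : a ≠ 0 := by
    intro h; rw [h] at ha2; simp at ha2
    exact absurd ha2.symm (div_pos hα hα').ne'
  have hb : b ≠ 0 := by
    intro h; rw [h] at hb2; simp at hb2
    exact absurd hb2.symm (div_pos hβ hβ').ne'
  have hA : α' * a ^ 2 = α := by rw [ha2]; field_simp
  have hB : β' * b ^ 2 = β := by rw [hb2]; field_simp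
  have hC : γ * (a ^ 2 * b ^ 2) = γ' := by
    rw [ha2, hb2]; field_simp; linear_combination hprod
  refine ⟨![a * b, b, 1], ?_, ?_⟩
  · intro i
    fin_cases i <;> simp [ha, hb]
  · intro x y
    simp only [Qgen, outer, Matrix.cons_val_zero, Matrix.cons_val_one, Matrix.head_cons,
      Matrix.cons_val_two, Matrix.tail_cons]
    have e0 : a * b * x 0 * (y 0 / (a * b)) = x 0 * y 0 := by field_simp
    have e1 : b * x 1 * (y 1 / b) = x 1 * y 1 := by field_simp
    have e2 : 1 * x 2 * (y 2 / 1) = x 2 * y 2 := by ring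
    have h4 : a * b * x 0 * (y 1 / b) = a * (x 0 * y 1) := by field_simp
    have e4 : α' * (a * b * x 0 * (y 1 / b)) ^ 2 = α * (x 0 * y 1) ^ 2 := by
      rw [h4]; linear_combination (x 0 * y 1) ^ 2 * hA
    have h5 : b * x 1 * (y 2 / 1) = b * (x 1 * y 2) := by ring
    have e5 : β' * (b * x 1 * (y 2 / 1)) ^ 2 = β * (x 1 * y 2) ^ 2 := by
      rw [h5]; linear_combination (x 1 * y 2) ^ 2 * hB
    have h6 : 1 * x 2 * (y 0 / (a * b)) = (x 2 * y 0) / (a * b) := by ring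
    have e6 : γ' * (1 * x 2 * (y 0 / (a * b))) ^ 2 = γ * (x 2 * y 0) ^ 2 := by
      rw [h6, div_pow, eq_comm, ← hC]
      field_simp
    rw [e0, e1, e2, e4, e5, e6]
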